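/- Let (R, 𝔪, k) be a Noetherian local ring of dimension d > 0, M a finitely generated R-module with dim M = t > 0, and x_1, …, x_t a system of parameters of M. The quotient (x)_M^{lim}/(x)M is the kernel of the canonical map M/(x)M → H^t_𝔪(M) into the top local cohomology, where H^t_𝔪(M) = colim_n M/(x_1^n, …, x_t^n)M with transition maps given by multiplication by x_1⋯x_t. -/
import Mathlib


noncomputable section

variable {R : Type*} [CommRing R] {M : Type*} [AddCommGroup M] [Module R M]

/-- The submodule `(x_1^n, …, x_t^n)M`. -/
def paramPow {t : ℕ} (x : Fin t → R) (n : ℕ) : Submodule R M :=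
  Ideal.span (Set.range fun i => x i ^ n) • (⊤ : Submodule R M)

/-- The limit closure of `x` in `M`:
`(x)_M^{lim} = ⋃_{n>0} ((x_1^{n+1}, …, x_t^{n+1})M :_M (x_1⋯x_t)^n)`. -/
def limClosure {t : ℕ} (x : Fin t → R) : Set M :=
  {m | ∃ n > 0, (∏ i, x i) ^ n • m ∈ paramPow (M := M) x (n + 1)}

theorem paramPow_key {t : ℕ} (x : Fin t → R) {n m : ℕ} (h : n ≤ m) :
    paramPow (M := M) x (n + 1) ≤
      (paramPow (M := M) x (m + 1)).comap
        (((∏ i, x i) ^ (m - n)) • (LinearMap.id : M →ₗ[R] M)) := by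
  have hc : ∀ r ∈ Ideal.span (Set.range fun i => x i ^ (n + 1)),
      (∏ i, x i) ^ (m - n) * r ∈ Ideal.span (Set.range fun i => x i ^ (m + 1)) := by
    intro r hr
    induction hr using Submodule.span_induction with
    | mem s hs =>
        obtain ⟨i, rfl⟩ := hs
        have h1 : x i ^ (m - n) ∣ (∏ j, x j) ^ (m - n) :=
          pow_dvd_pow_of_dvd (Finset.dvd_prod_of_mem x (Finset.mem_univ i)) _
        have h2 : x i ^ (m + 1) ∣ (∏ j, x j) ^ (m - n) * x i ^ (n + 1) := by
          have h3 : x i ^ (m + 1) = x i ^ (m - n) * x i ^ (n + 1) := by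
            rw [← pow_add]; congr 1; omega
          rw [h3]; exact mul_dvd_mul h1 dvd_rfl
        obtain ⟨u, hu⟩ := h2
        rw [hu]
        exact Ideal.mul_mem_right _ _ (Ideal.subset_span ⟨i, rfl⟩)
    | zero => simp
    | add a b _ _ iha ihb => rw [mul_add]; exact add_mem iha ihb
    | smul r s hs ih =>
        rw [smul_eq_mul, mul_left_comm]
        exact Ideal.mul_mem_left _ _ ih
  intro a ha
  simp only [Submodule.mem_comap, LinearMap.smul_apply, LinearMap.id_coe, id_eq]
  refine Submodule.smul_induction_on ha ?_ ?_
  · intro r hr mm _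
    rw [smul_smul]
    exact Submodule.smul_mem_smul (hc r hr) trivial
  · intro a b iha ihb
    rw [smul_add]
    exact add_mem iha ihb

/-- The transition maps of the direct system computing `H^t_𝔪(M)`: from `M/(x_1^{n+1},…)M`
to `M/(x_1^{m+1},…)M`, multiplication by `(x_1⋯x_t)^{m-n}`. -/
def transMap {t : ℕ} (x : Fin t → R) {n m : ℕ} (h : n ≤ m) :
    (M ⧸ paramPow (M := M) x (n + 1)) →ₗ[R] (M ⧸ paramPow (M := M) x (m + 1)) :=
  Submodule.mapQ _ _ (((∏ i, x i) ^ (m - n)) • (LinearMap.id : M →ₗ[R] M)) (paramPow_key x h)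

/-- The top local cohomology `H^t_𝔪(M) = colim_n M/(x_1^{n+1}, …, x_t^{n+1})M`, the colimit
taken along multiplication by `x_1⋯x_t`. -/
abbrev topLocalCohomology {t : ℕ} (x : Fin t → R) : Type _ :=
  Module.DirectLimit (fun n : ℕ => M ⧸ paramPow (M := M) x (n + 1)) fun _ _ h => transMap x h

/-- The canonical map `M/(x)M → H^t_𝔪(M)`, the structure map to the colimit at `n = 0`
(i.e. at the stage `M/(x_1^1, …, x_t^1)M = M/(x)M`). -/
def canonicalMap {t : ℕ} (x : Fin t → R) :
    (M ⧸ paramPow (M := M) x 1) →ₗ[R] topLocalCohomology (M := M) x :=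
  Module.DirectLimit.of R ℕ (fun n : ℕ => M ⧸ paramPow (M := M) x (n + 1))
    (fun _ _ h => transMap x h) 0

theorem transMap_mk {t : ℕ} (x : Fin t → R) {n m : ℕ} (h : n ≤ m) (a : M) :
    transMap (M := M) x h (Submodule.Quotient.mk a) =
      Submodule.Quotient.mk ((∏ i, x i) ^ (m - n) • a) := by
  simp [transMap, Submodule.mapQ_apply]

instance dirSys {t : ℕ} (x : Fin t → R) :
    DirectedSystem (fun n : ℕ => M ⧸ paramPow (M := M) x (n + 1))
      (fun _ _ h => transMap (M := M) x h) where
  map_self i a := by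
    obtain ⟨a, rfl⟩ := Submodule.Quotient.mk_surjective _ a
    simp [transMap_mk]
  map_map k j i hij hjk a := by
    obtain ⟨a, rfl⟩ := Submodule.Quotient.mk_surjective _ a
    rw [transMap_mk, transMap_mk, transMap_mk, smul_smul, ← pow_add,
      tsub_add_tsub_cancel hjk hij]

theorem limClosure_mem_ker {t : ℕ} (x : Fin t → R) {a : M} (ha : a ∈ limClosure (M := M) x) :
    canonicalMap (M := M) x (Submodule.Quotient.mk a) = 0 := by
  obtain ⟨n, -, hn⟩ := ha
  have h0 : (0 : ℕ) ≤ n := Nat.zero_le n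
  have key : (Submodule.Quotient.mk ((∏ i, x i) ^ (n - 0) • a) :
      M ⧸ paramPow (M := M) x (n + 1)) = 0 :=
    (Submodule.Quotient.mk_eq_zero _).mpr (by simpa using hn)
  calc canonicalMap (M := M) x (Submodule.Quotient.mk a)
      = Module.DirectLimit.of R ℕ (fun n : ℕ => M ⧸ paramPow (M := M) x (n + 1))
          (fun _ _ h => transMap x h) n (transMap x h0 (Submodule.Quotient.mk a)) :=
        (Module.DirectLimit.of_f (hij := h0)).symm
    _ = 0 := by rw [transMap_mk, key, map_zero]

/-- Let `(R,𝔪)` be a Noetherian local ring of dimension `d > 0`, `M` a finitely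
generated `R`-module with `dim M = t > 0`, and `x_1, …, x_t` a system of parameters of `M`.
Then `(x)_M^{lim}/(x)M` is the kernel of the canonical map `M/(x)M → H^t_𝔪(M)`, where
`H^t_𝔪(M)` is the direct limit of the `M/(x_1^n,…,x_t^n)M` along multiplication by
`x_1⋯x_t`. -/
theorem ker_canonicalMap_eq_limClosure {R : Type*} [CommRing R] [IsNoetherianRing R]
    [IsLocalRing R] {d : ℕ} (hd : 0 < d) (hRdim : ringKrullDim R = d)
    {M : Type*} [AddCommGroup M] [Module R M] [Module.Finite R M]
    {t : ℕ} (ht : 0 < t) (x : Fin t → R)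
    (hdim : ringKrullDim (R ⧸ Module.annihilator R M) = t)
    (hsop : IsFiniteLength R (M ⧸ paramPow (M := M) x 1)) :
    (LinearMap.ker (canonicalMap (M := M) x) : Set (M ⧸ paramPow (M := M) x 1)) =
      (paramPow (M := M) x 1).mkQ '' limClosure x := by
  ext y
  obtain ⟨a, rfl⟩ := Submodule.Quotient.mk_surjective _ y
  simp only [SetLike.mem_coe, LinearMap.mem_ker, Set.mem_image]
  constructor
  · intro h
    obtain ⟨j, hij, hj⟩ := Module.DirectLimit.of.zero_exact h
    rw [transMap_mk, Submodule.Quotient.mk_eq_zero] at hj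
    refine ⟨a, ⟨j + 1, Nat.succ_pos _, ?_⟩, rfl⟩
    have := Submodule.mem_comap.mp (paramPow_key (M := M) x (Nat.le_succ j) hj)
    simpa [smul_smul, ← pow_succ] using this
  · rintro ⟨a', ha', hea⟩
    rw [Submodule.mkQ_apply] at hea
    rw [← hea]
    exact limClosure_mem_ker x ha'


end
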